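/- arXiv:1005.1519 — 2 statements merged into one kernel-verified Lean document; each statement's English description precedes it below -/
import Mathlib

section
/- Fix p0 ∈ (0,2), γ ∈ (0,1), and α0 ∈ (p0, 2). Define g(α) = ∫_{p0}^2 |R_{α0}(p) − R_α(p)|^γ dp for α ∈ [0,2]. Then g(α0) = 0, and g(α) > 0 for every α ∈ [0,2] with α ≠ α0. -/
open MeasureTheory Real Set

/-- `m_α(p)`: the `p`-th absolute moment of a standard symmetric `α`-stable random
variable, `m_α(p) = 2^(p−1) Γ(1 − p/α) / (p ∫_0^∞ u^(−p−1) sin²(u) du)`. -/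
noncomputable def mstable (a p : ℝ) : ℝ :=
  2 ^ (p - 1) * Real.Gamma (1 - p / a) /
    (p * ∫ u in Set.Ioi (0:ℝ), u ^ (-p - 1) * Real.sin u ^ 2)

/-- `R_α(p) = (m_α(p0))^{1/p0} / (m_α(p))^{1/p}` if `p < α`, and `0` otherwise. -/
noncomputable def Rstable (p0 a p : ℝ) : ℝ :=
  if p < a then mstable a p0 ^ (1 / p0) / mstable a p ^ (1 / p) else 0


lemma measurable_rpow2 : Measurable fun p : ℝ × ℝ => p.1 ^ p.2 := by
  have h : (fun p : ℝ × ℝ => p.1 ^ p.2) = fun p =>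
      if p.1 < 0 then Real.exp (Real.log p.1 * p.2) * Real.cos (p.2 * π)
      else if p.1 = 0 then (if p.2 = 0 then 1 else 0)
      else Real.exp (Real.log p.1 * p.2) := by
    funext p
    rcases lt_trichotomy p.1 0 with h1 | h1 | h1
    · rw [if_pos h1, Real.rpow_def_of_neg h1]
    · rw [if_neg (by simp [h1]), if_pos h1, h1]
      by_cases h2 : p.2 = 0
      · rw [if_pos h2, h2, Real.rpow_zero]
      · rw [if_neg h2, Real.zero_rpow h2]
    · rw [if_neg (not_lt.2 h1.le), if_neg h1.ne', Real.rpow_def_of_pos h1]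
  rw [h]
  apply Measurable.ite (measurableSet_lt measurable_fst measurable_const)
  · exact ((Real.measurable_log.comp measurable_fst).mul measurable_snd).exp.mul
      (Real.measurable_cos.comp (measurable_snd.mul_const π))
  · apply Measurable.ite (measurable_fst (measurableSet_singleton 0))
    · exact Measurable.ite (measurable_snd (measurableSet_singleton 0)) measurable_const
        measurable_const
    · exact ((Real.measurable_log.comp measurable_fst).mul measurable_snd).exp

lemma measurable_rpow_fun {α : Type*} [MeasurableSpace α] {f g : α → ℝ} (hf : Measurable f) (hg : Measurable g) :
    Measurable fun x => f x ^ g x :=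
  measurable_rpow2.comp (hf.prodMk hg)

lemma measurable_Gamma' : Measurable Real.Gamma := by
  apply measurable_of_tendsto_metrizable (f := fun n s => Real.GammaSeq s n)
  · intro n
    apply Measurable.div
    · exact (measurable_rpow_fun measurable_const measurable_id).mul measurable_const
    · exact Finset.measurable_prod _ fun j _ => measurable_id.add_const _
  · exact tendsto_pi_nhds.2 fun s => Real.GammaSeq_tendsto_Gamma s


section
variable {p : ℝ}

lemma sinInt_measurable : Measurable fun u : ℝ => u ^ (-p - 1) * Real.sin u ^ 2 :=
  (measurable_rpow_fun measurable_id measurable_const).mul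
    (Real.measurable_sin.pow_const 2)

lemma sinInt_int1 (hp2 : p < 2) :
    IntegrableOn (fun u : ℝ => u ^ (-p - 1) * Real.sin u ^ 2) (Ioc 0 1) := by
  have hg : IntegrableOn (fun u : ℝ => u ^ (1 - p)) (Ioc 0 1) := by
    have := intervalIntegral.intervalIntegrable_rpow' (a := 0) (b := 1)
      (r := 1 - p) (by linarith)
    rwa [intervalIntegrable_iff_integrableOn_Ioc_of_le zero_le_one] at this
  refine hg.mono' sinInt_measurable.aestronglyMeasurable ?_
  filter_upwards [ae_restrict_mem measurableSet_Ioc] with u hu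
  have hu0 : 0 < u := hu.1
  have hru : (0:ℝ) < u ^ (-p - 1) := Real.rpow_pos_of_pos hu0 _
  have h1 : Real.sin u ^ 2 ≤ u ^ 2 := Real.sin_sq_le_sq
  have key : u ^ (-p - 1) * Real.sin u ^ 2 ≤ u ^ (1 - p) := by
    calc u ^ (-p - 1) * Real.sin u ^ 2 ≤ u ^ (-p - 1) * u ^ 2 := by
          exact mul_le_mul_of_nonneg_left h1 hru.le
      _ = u ^ (-p - 1) * u ^ (2:ℝ) := by rw [Real.rpow_two]
      _ = u ^ (1 - p) := by rw [← Real.rpow_add hu0]; ring_nf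
  rw [Real.norm_eq_abs, abs_of_nonneg (mul_nonneg hru.le (sq_nonneg _))]
  exact key

lemma sinInt_int2 (hp : 0 < p) :
    IntegrableOn (fun u : ℝ => u ^ (-p - 1) * Real.sin u ^ 2) (Ioi 1) := by
  have hg : IntegrableOn (fun u : ℝ => u ^ (-p - 1)) (Ioi 1) :=
    integrableOn_Ioi_rpow_of_lt (by linarith) one_pos
  refine hg.mono' sinInt_measurable.aestronglyMeasurable ?_
  filter_upwards [ae_restrict_mem measurableSet_Ioi] with u hu
  have hu0 : (0:ℝ) < u := lt_trans one_pos hu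
  have hru : (0:ℝ) < u ^ (-p - 1) := Real.rpow_pos_of_pos hu0 _
  rw [Real.norm_eq_abs, abs_of_nonneg (mul_nonneg hru.le (sq_nonneg _))]
  calc u ^ (-p - 1) * Real.sin u ^ 2 ≤ u ^ (-p - 1) * 1 := by
        refine mul_le_mul_of_nonneg_left ?_ hru.le
        have h2 : |Real.sin u| ≤ 1 := abs_le.2 ⟨Real.neg_one_le_sin u, Real.sin_le_one u⟩
        calc Real.sin u ^ 2 = |Real.sin u| ^ 2 := (sq_abs _).symm
          _ ≤ 1 ^ 2 := pow_le_pow_left₀ (abs_nonneg _) h2 2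
          _ = 1 := one_pow 2
    _ = u ^ (-p - 1) := mul_one _

lemma sinInt_integrableOn (hp : 0 < p) (hp2 : p < 2) :
    IntegrableOn (fun u : ℝ => u ^ (-p - 1) * Real.sin u ^ 2) (Ioi 0) := by
  rw [← Ioc_union_Ioi_eq_Ioi (zero_le_one (α := ℝ))]
  exact (sinInt_int1 hp2).union (sinInt_int2 hp)

lemma sinInt_nonneg_ae :
    0 ≤ᵐ[volume.restrict (Ioi (0:ℝ))] fun u : ℝ => u ^ (-p - 1) * Real.sin u ^ 2 := by
  filter_upwards [ae_restrict_mem measurableSet_Ioi] with u hu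
  exact mul_nonneg (Real.rpow_nonneg (le_of_lt hu) _) (sq_nonneg _)

lemma sinInt_pos (hp : 0 < p) (hp2 : p < 2) :
    0 < ∫ u in Ioi (0:ℝ), u ^ (-p - 1) * Real.sin u ^ 2 := by
  rw [setIntegral_pos_iff_support_of_nonneg_ae sinInt_nonneg_ae (sinInt_integrableOn hp hp2)]
  have hsub : Ioo (1:ℝ) 2 ⊆ Function.support (fun u : ℝ => u ^ (-p - 1) * Real.sin u ^ 2) ∩ Ioi 0 := by
    intro u hu
    have hu0 : (0:ℝ) < u := lt_trans one_pos hu.1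
    have hsin : 0 < Real.sin u := Real.sin_pos_of_pos_of_lt_pi hu0
      (lt_trans hu.2 (by linarith [Real.pi_gt_three]))
    refine ⟨?_, hu0⟩
    exact ne_of_gt (mul_pos (Real.rpow_pos_of_pos hu0 _) (pow_pos hsin 2))
  calc (0:ENNReal) < volume (Ioo (1:ℝ) 2) := by simp
    _ ≤ _ := measure_mono hsub

lemma sinInt_le (hp : 0 < p) (hp2 : p < 2) :
    (∫ u in Ioi (0:ℝ), u ^ (-p - 1) * Real.sin u ^ 2) ≤ 1 / (2 - p) + 1 / p := by
  rw [← Ioc_union_Ioi_eq_Ioi (zero_le_one (α := ℝ)),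
    setIntegral_union (Ioc_disjoint_Ioi le_rfl) measurableSet_Ioi (sinInt_int1 hp2) (sinInt_int2 hp)]
  have h1 : (∫ u in Ioc (0:ℝ) 1, u ^ (-p - 1) * Real.sin u ^ 2) ≤ 1 / (2 - p) := by
    have hg : IntegrableOn (fun u : ℝ => u ^ (1 - p)) (Ioc 0 1) := by
      have := intervalIntegral.intervalIntegrable_rpow' (a := 0) (b := 1)
        (r := 1 - p) (by linarith)
      rwa [intervalIntegrable_iff_integrableOn_Ioc_of_le zero_le_one] at this
    calc (∫ u in Ioc (0:ℝ) 1, u ^ (-p - 1) * Real.sin u ^ 2)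
        ≤ ∫ u in Ioc (0:ℝ) 1, u ^ (1 - p) := by
          refine setIntegral_mono_on (sinInt_int1 hp2) hg measurableSet_Ioc ?_
          intro u hu
          have hu0 : 0 < u := hu.1
          calc u ^ (-p - 1) * Real.sin u ^ 2 ≤ u ^ (-p - 1) * u ^ 2 :=
                mul_le_mul_of_nonneg_left Real.sin_sq_le_sq (Real.rpow_nonneg hu0.le _)
            _ = u ^ (-p - 1) * u ^ (2:ℝ) := by rw [Real.rpow_two]
            _ = u ^ (1 - p) := by rw [← Real.rpow_add hu0]; ring_nf
      _ = 1 / (2 - p) := by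
          rw [← intervalIntegral.integral_of_le zero_le_one,
            integral_rpow (Or.inl (by linarith))]
          rw [Real.one_rpow, Real.zero_rpow (by linarith : (1:ℝ) - p + 1 ≠ 0)]
          ring_nf
  have h2 : (∫ u in Ioi (1:ℝ), u ^ (-p - 1) * Real.sin u ^ 2) ≤ 1 / p := by
    calc (∫ u in Ioi (1:ℝ), u ^ (-p - 1) * Real.sin u ^ 2)
        ≤ ∫ u in Ioi (1:ℝ), u ^ (-p - 1) := by
          refine setIntegral_mono_on (sinInt_int2 hp)
            (integrableOn_Ioi_rpow_of_lt (by linarith) one_pos) measurableSet_Ioi ?_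
          intro u hu
          have hu0 : (0:ℝ) < u := lt_trans one_pos hu
          have h2 : |Real.sin u| ≤ 1 := abs_le.2 ⟨Real.neg_one_le_sin u, Real.sin_le_one u⟩
          calc u ^ (-p - 1) * Real.sin u ^ 2 ≤ u ^ (-p - 1) * 1 := by
                refine mul_le_mul_of_nonneg_left ?_ (Real.rpow_nonneg hu0.le _)
                calc Real.sin u ^ 2 = |Real.sin u| ^ 2 := (sq_abs _).symm
                  _ ≤ 1 ^ 2 := pow_le_pow_left₀ (abs_nonneg _) h2 2
                  _ = 1 := one_pow 2
            _ = u ^ (-p - 1) := mul_one _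
      _ = 1 / p := by
          rw [integral_Ioi_rpow_of_lt (by linarith) one_pos]
          rw [Real.one_rpow]
          field_simp
          rw [show -p - 1 + 1 = -p by ring, div_neg, neg_neg, div_self hp.ne']
  linarith

end

/-- A positive lower bound for `Γ` on `(0,1)` of the form `m / x`. -/
lemma gamma_lower : ∃ m : ℝ, 0 < m ∧ ∀ x : ℝ, 0 < x → x < 1 → m / x ≤ Real.Gamma x := by
  have hc : ContinuousOn Real.Gamma (Icc (1:ℝ) 2) := by
    intro x hx
    exact (Real.differentiableAt_Gamma (fun n => by
      have h1 := hx.1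
      have h2 : (0:ℝ) ≤ (n:ℝ) := Nat.cast_nonneg n
      intro h; rw [h] at h1; linarith)).continuousAt.continuousWithinAt
  obtain ⟨z, hz, hmin⟩ := isCompact_Icc.exists_isMinOn (nonempty_Icc.2 one_le_two) hc
  refine ⟨Real.Gamma z, Real.Gamma_pos_of_pos (lt_of_lt_of_le one_pos hz.1), ?_⟩
  intro x hx0 hx1
  have h1 : Real.Gamma (x + 1) = x * Real.Gamma x := Real.Gamma_add_one hx0.ne'
  have h2 : Real.Gamma z ≤ Real.Gamma (x + 1) := hmin ⟨by linarith, by linarith⟩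
  rw [div_le_iff₀ hx0]
  calc Real.Gamma z ≤ Real.Gamma (x + 1) := h2
    _ = x * Real.Gamma x := h1
    _ = Real.Gamma x * x := mul_comm _ _

lemma mstable_pos {a p : ℝ} (hp : 0 < p) (hpa : p < a) (ha : a ≤ 2) :
    0 < mstable a p := by
  have hp2 : p < 2 := lt_of_lt_of_le hpa ha
  have ha0 : 0 < a := lt_trans hp hpa
  have hg : 0 < Real.Gamma (1 - p / a) :=
    Real.Gamma_pos_of_pos (by rw [sub_pos]; exact (div_lt_one ha0).2 hpa)
  exact div_pos (mul_pos (Real.rpow_pos_of_pos two_pos _) hg)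
    (mul_pos hp (sinInt_pos hp hp2))

/-- Uniform positive lower bound for `mstable a p` for `p ∈ [p0, a)`. -/
lemma mstable_lower {p0 a : ℝ} (hp0 : 0 < p0) (ha : a ≤ 2) :
    ∃ c : ℝ, 0 < c ∧ ∀ p : ℝ, p0 ≤ p → p < a → c ≤ mstable a p := by
  obtain ⟨m, hm, hmle⟩ := gamma_lower
  have hB : (0:ℝ) < 2 + 4 / p0 := by positivity
  refine ⟨2 ^ (p0 - 1) * (m * p0) / (2 + 4 / p0), by positivity, ?_⟩
  intro p hp0p hpa
  have hp : 0 < p := lt_of_lt_of_le hp0 hp0p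
  have hp2 : p < 2 := lt_of_lt_of_le hpa ha
  have ha0 : 0 < a := lt_trans hp hpa
  have hX0 : (0:ℝ) < 2 - p := by linarith
  set I : ℝ := ∫ u in Ioi (0:ℝ), u ^ (-p - 1) * Real.sin u ^ 2 with hI
  have hIpos : 0 < I := sinInt_pos hp hp2
  have hIle : I ≤ 1 / (2 - p) + 1 / p0 := by
    have h1 : 1 / p ≤ 1 / p0 := one_div_le_one_div_of_le hp0 hp0p
    have := sinInt_le hp hp2
    rw [← hI] at this
    linarith
  set G : ℝ := Real.Gamma (1 - p / a) with hG
  have hfrac0 : 0 < 1 - p / a := by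
    rw [sub_pos]; exact (div_lt_one ha0).2 hpa
  have hfrac1 : 1 - p / a < 1 := by
    have : 0 < p / a := div_pos hp ha0
    linarith
  have hGpos : 0 < G := Real.Gamma_pos_of_pos hfrac0
  have hGlb : m * p0 / (2 - p) ≤ G := by
    have h1 : 1 - p / a ≤ (2 - p) / p0 := by
      have h2 : 1 - p / a = (a - p) / a := by field_simp
      rw [h2]
      exact div_le_div₀ (by positivity) (by linarith) hp0 (by linarith)
    calc m * p0 / (2 - p) = m / ((2 - p) / p0) := by
          rw [div_div_eq_mul_div]
      _ ≤ m / (1 - p / a) := div_le_div₀ hm.le le_rfl hfrac0 h1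
      _ ≤ G := hmle _ hfrac0 hfrac1
  set K : ℝ := 2 * (1 / (2 - p) + 1 / p0) with hK
  have hKpos : 0 < K := by rw [hK]; positivity
  have hDle : p * I ≤ K := by
    rw [hK]
    exact mul_le_mul hp2.le hIle hIpos.le two_pos.le
  have hDpos : 0 < p * I := mul_pos hp hIpos
  have hrw : 2 + 2 * (2 - p) / p0 = (2 - p) * K := by
    rw [hK]; field_simp
  have hP0 : (0:ℝ) < 2 ^ (p0 - 1) := Real.rpow_pos_of_pos two_pos _
  have hP : (0:ℝ) < 2 ^ (p - 1) := Real.rpow_pos_of_pos two_pos _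
  calc 2 ^ (p0 - 1) * (m * p0) / (2 + 4 / p0)
      ≤ 2 ^ (p0 - 1) * (m * p0) / (2 + 2 * (2 - p) / p0) := by
        refine div_le_div₀ (by positivity) le_rfl (by positivity) ?_
        have : 2 * (2 - p) / p0 ≤ 4 / p0 :=
          div_le_div₀ (by norm_num) (by linarith) hp0 le_rfl
        linarith
    _ = 2 ^ (p0 - 1) * (m * p0 / (2 - p)) / K := by
        rw [hrw, ← div_div, mul_div_assoc]
    _ ≤ 2 ^ (p0 - 1) * G / K :=
        div_le_div₀ (mul_nonneg hP0.le hGpos.le)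
          (mul_le_mul_of_nonneg_left hGlb hP0.le) hKpos le_rfl
    _ ≤ 2 ^ (p - 1) * G / K :=
        div_le_div₀ (mul_nonneg hP.le hGpos.le)
          (mul_le_mul_of_nonneg_right
            (Real.rpow_le_rpow_of_exponent_le one_le_two (by linarith)) hGpos.le)
          hKpos le_rfl
    _ ≤ 2 ^ (p - 1) * G / (p * I) :=
        div_le_div₀ (mul_nonneg hP.le hGpos.le) le_rfl hDpos hDle
    _ = mstable a p := by rw [mstable, ← hI, ← hG]

lemma Rstable_pos {p0 a p : ℝ} (hp0 : 0 < p0) (hp0a : p0 < a) (hp : 0 < p)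
    (hpa : p < a) (ha : a ≤ 2) : 0 < Rstable p0 a p := by
  rw [Rstable, if_pos hpa]
  exact div_pos (Real.rpow_pos_of_pos (mstable_pos hp0 hp0a ha) _)
    (Real.rpow_pos_of_pos (mstable_pos hp hpa ha) _)

lemma Rstable_bound {p0 b : ℝ} (hp0 : 0 < p0) (hb : b ≤ 2) :
    ∃ M : ℝ, ∀ p ∈ Icc p0 2, |Rstable p0 b p| ≤ M := by
  by_cases hbp0 : b ≤ p0
  · refine ⟨0, fun p hp => ?_⟩
    rw [Rstable, if_neg (not_lt.2 (le_trans hbp0 hp.1))]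
    simp
  push_neg at hbp0
  obtain ⟨c, hc, hcm⟩ := mstable_lower hp0 hb
  set c' : ℝ := min c 1 with hc'
  have hc'0 : 0 < c' := lt_min hc one_pos
  have hc'1 : c' ≤ 1 := min_le_right _ _
  have hA : 0 < mstable b p0 := mstable_pos hp0 hbp0 hb
  set A : ℝ := mstable b p0 ^ (1 / p0) with hAdef
  have hApos : 0 < A := Real.rpow_pos_of_pos hA _
  refine ⟨A / c' ^ (1 / p0), fun p hp => ?_⟩
  by_cases hpb : p < b
  · have hp' : 0 < p := lt_of_lt_of_le hp0 hp.1
    have hms : c ≤ mstable b p := hcm p hp.1 hpb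
    have hms' : c' ≤ mstable b p := le_trans (min_le_left _ _) hms
    have hmsp : 0 < mstable b p := lt_of_lt_of_le hc'0 hms'
    have hden : c' ^ (1 / p0) ≤ mstable b p ^ (1 / p) := by
      calc c' ^ (1 / p0) ≤ c' ^ (1 / p) :=
            Real.rpow_le_rpow_of_exponent_ge hc'0 hc'1
              (one_div_le_one_div_of_le hp0 hp.1)
        _ ≤ mstable b p ^ (1 / p) :=
            Real.rpow_le_rpow hc'0.le hms' (by positivity)
    rw [Rstable, if_pos hpb, abs_of_nonneg (div_nonneg hApos.le (Real.rpow_nonneg hmsp.le _))]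
    exact div_le_div₀ hApos.le le_rfl (Real.rpow_pos_of_pos hc'0 _) hden
  · rw [Rstable, if_neg hpb]
    simp only [abs_zero]
    positivity

lemma mstable_measurable {b : ℝ} : Measurable (mstable b) := by
  have hI : Measurable fun p : ℝ => ∫ u in Ioi (0:ℝ), u ^ (-p - 1) * Real.sin u ^ 2 := by
    have hm : StronglyMeasurable
        (Function.uncurry fun (p u : ℝ) => u ^ (-p - 1) * Real.sin u ^ 2) := by
      apply Measurable.stronglyMeasurable
      show Measurable fun q : ℝ × ℝ => q.2 ^ (-q.1 - 1) * Real.sin q.2 ^ 2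
      exact (measurable_rpow_fun measurable_snd
        ((measurable_fst.neg).sub measurable_const)).mul
        ((Real.measurable_sin.comp measurable_snd).pow_const 2)
    exact (hm.integral_prod_right (ν := volume.restrict (Ioi 0))).measurable
  apply Measurable.div
  · exact (measurable_rpow_fun measurable_const (measurable_id.sub_const 1)).mul
      (measurable_Gamma'.comp (measurable_const.sub (measurable_id.div_const b)))
  · exact measurable_id.mul hI

lemma Rstable_measurable {p0 b : ℝ} : Measurable (Rstable p0 b) := by
  have h1 : Measurable fun p : ℝ =>
      mstable b p0 ^ (1 / p0) / mstable b p ^ (1 / p) :=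
    measurable_const.div
      (measurable_rpow_fun mstable_measurable (measurable_const.div measurable_id))
  exact Measurable.ite (measurableSet_lt measurable_id measurable_const) h1 measurable_const


/-- Fix `p0 ∈ (0,2)`, `γ ∈ (0,1)` and `α0 ∈ (p0,2)`, and let
`g(α) = ∫_{p0}^2 |R_{α0}(p) − R_α(p)|^γ dp`. Then `g(α0) = 0` and `g(α) > 0` for every
`α ∈ [0,2]` with `α ≠ α0`. -/
theorem contrast_function_vanishes_only_at_alpha0 (p0 γ α0 : ℝ)
    (hp0 : p0 ∈ Set.Ioo (0:ℝ) 2) (hγ : γ ∈ Set.Ioo (0:ℝ) 1) (hα0 : α0 ∈ Set.Ioo p0 2) :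
    (∫ p in p0..2, |Rstable p0 α0 p - Rstable p0 α0 p| ^ γ) = 0 ∧
    ∀ a ∈ Set.Icc (0:ℝ) 2, a ≠ α0 →
      0 < ∫ p in p0..2, |Rstable p0 α0 p - Rstable p0 a p| ^ γ := by
  obtain ⟨hp0pos, hp02⟩ := hp0
  obtain ⟨hγ0, hγ1⟩ := hγ
  obtain ⟨hα0l, hα0r⟩ := hα0
  constructor
  · simp [Real.zero_rpow hγ0.ne']
  intro a ha hne
  obtain ⟨ha0, ha2⟩ := ha
  set f : ℝ → ℝ := fun p => |Rstable p0 α0 p - Rstable p0 a p| ^ γ with hf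
  have hfnonneg : ∀ p, 0 ≤ f p := fun p => Real.rpow_nonneg (abs_nonneg _) _
  have hfmeas : Measurable f :=
    measurable_rpow_fun (Rstable_measurable.sub Rstable_measurable).abs measurable_const
  -- integrability on Ioc p0 2
  obtain ⟨M1, hM1⟩ := Rstable_bound (b := α0) hp0pos hα0r.le
  obtain ⟨M2, hM2⟩ := Rstable_bound (b := a) hp0pos ha2
  have hInt : IntegrableOn f (Ioc p0 2) := by
    apply Measure.integrableOn_of_bounded (M := (M1 + M2) ^ γ)
    · rw [Real.volume_Ioc]; exact ENNReal.ofReal_ne_top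
    · exact hfmeas.aestronglyMeasurable
    · filter_upwards [ae_restrict_mem measurableSet_Ioc] with p hp
      have hp' : p ∈ Icc p0 2 := Ioc_subset_Icc_self hp
      have h1 := hM1 p hp'
      have h2 := hM2 p hp'
      have habs : |Rstable p0 α0 p - Rstable p0 a p| ≤ M1 + M2 :=
        (abs_sub _ _).trans (add_le_add h1 h2)
      rw [Real.norm_eq_abs, abs_of_nonneg (hfnonneg p)]
      exact Real.rpow_le_rpow (abs_nonneg _) habs hγ0.le
  -- choose a subinterval where f is positive
  obtain ⟨c, d, hcd, hsub, hpos⟩ :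
      ∃ c d : ℝ, c < d ∧ Ioo c d ⊆ Ioc p0 2 ∧ ∀ p ∈ Ioo c d, 0 < f p := by
    rcases lt_or_gt_of_ne hne with hlt | hgt
    · -- a < α0 : use (max a p0, α0)
      refine ⟨max a p0, α0, max_lt hlt hα0l, ?_, ?_⟩
      · intro p hp
        exact ⟨lt_of_le_of_lt (le_max_right a p0) hp.1, le_of_lt (lt_trans hp.2 hα0r)⟩
      · intro p hp
        have hp0p : p0 < p := lt_of_le_of_lt (le_max_right a p0) hp.1
        have hppos : 0 < p := lt_trans hp0pos hp0p
        have hpa : ¬ p < a := not_lt.2 (le_of_lt (lt_of_le_of_lt (le_max_left a p0) hp.1))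
        have hR2 : Rstable p0 a p = 0 := by rw [Rstable, if_neg hpa]
        have hR1 : 0 < Rstable p0 α0 p :=
          Rstable_pos hp0pos hα0l hppos hp.2 hα0r.le
        have : 0 < |Rstable p0 α0 p - Rstable p0 a p| := by
          rw [hR2, sub_zero, abs_of_pos hR1]; exact hR1
        exact Real.rpow_pos_of_pos this γ
    · -- α0 < a : use (α0, a)
      refine ⟨α0, a, hgt, ?_, ?_⟩
      · intro p hp
        exact ⟨lt_trans hα0l hp.1, le_of_lt (lt_of_lt_of_le hp.2 ha2)⟩
      · intro p hp
        have hppos : 0 < p := lt_trans (lt_trans hp0pos hα0l) hp.1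
        have hR1 : Rstable p0 α0 p = 0 := by
          rw [Rstable, if_neg (not_lt.2 hp.1.le)]
        have hR2 : 0 < Rstable p0 a p :=
          Rstable_pos hp0pos (lt_trans hα0l hgt) hppos hp.2 ha2
        have : 0 < |Rstable p0 α0 p - Rstable p0 a p| := by
          rw [hR1, zero_sub, abs_neg, abs_of_pos hR2]; exact hR2
        exact Real.rpow_pos_of_pos this γ
  have hIoc : 0 < ∫ p in Ioc p0 2, f p := by
    rw [setIntegral_pos_iff_support_of_nonneg_ae
      (Filter.Eventually.of_forall hfnonneg) hInt]
    have hsub2 : Ioo c d ⊆ Function.support f ∩ Ioc p0 2 := fun p hp =>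
      ⟨ne_of_gt (hpos p hp), hsub hp⟩
    calc (0:ENNReal) < volume (Ioo c d) := by simp [hcd]
      _ ≤ _ := measure_mono hsub2
  rw [intervalIntegral.integral_of_le (by linarith : p0 ≤ 2)]
  exact hIoc
end

section
/- Let α ∈ (0,2) and H ∈ (0,1) with H − 1/α ≥ 0. Define g(u) = |1+u|^{H−1/α} − |u|^{H−1/α} for u ∈ ℝ. Then lim_{j→∞} ∫_ℝ |g(−x) g(j−x)|^{α/2} dx = 0. -/
open MeasureTheory Real Set Filter

/-- The increment kernel of the well-balanced linear fractional `α`-stable motion: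
`g(u) = |1+u|^(H−1/α) − |u|^(H−1/α)`. -/
noncomputable def lfsmKernel (a H : ℝ) (u : ℝ) : ℝ :=
  |1 + u| ^ (H - 1 / a) - |u| ^ (H - 1 / a)

private lemma bern_step {κ : ℝ} (hκ0 : 0 ≤ κ) (hκ1 : κ ≤ 1) {v : ℝ} (hv : 1 ≤ v) :
    (1 + v) ^ κ - v ^ κ ≤ v ^ (κ - 1) := by
  have hv0 : (0:ℝ) < v := lt_of_lt_of_le one_pos hv
  have hvinv : (0:ℝ) ≤ 1 / v := by positivity
  have key : (1 + v) ^ κ ≤ v ^ κ + κ * v ^ (κ - 1) := by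
    have h1 : (1:ℝ) + v = v * (1 + 1 / v) := by field_simp; ring
    rw [h1, Real.mul_rpow hv0.le (by positivity)]
    have h2 : (1 + 1 / v : ℝ) ^ κ ≤ 1 + κ * (1 / v) :=
      rpow_one_add_le_one_add_mul_self (by linarith) hκ0 hκ1
    calc v ^ κ * (1 + 1 / v) ^ κ ≤ v ^ κ * (1 + κ * (1 / v)) :=
          mul_le_mul_of_nonneg_left h2 (Real.rpow_nonneg hv0.le κ)
      _ = v ^ κ + κ * (v ^ κ / v) := by field_simp
      _ = v ^ κ + κ * v ^ (κ - 1) := by rw [Real.rpow_sub_one hv0.ne' κ]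
  have h3 : κ * v ^ (κ - 1) ≤ v ^ (κ - 1) := by
    nlinarith [Real.rpow_nonneg hv0.le (κ - 1)]
  linarith

private lemma shrink {κ w t : ℝ} (hκ0 : 0 ≤ κ) (hκ1 : κ ≤ 1) (hw : 0 < w) (ht : 0 ≤ t)
    (h : (1 + t) / 3 ≤ w) : w ^ (κ - 1) ≤ 3 * (1 + t) ^ (κ - 1) := by
  have h1 : w ^ (κ - 1) ≤ ((1 + t) / 3) ^ (κ - 1) :=
    Real.rpow_le_rpow_of_nonpos (by positivity) h (by linarith)
  have h2 : ((1 + t) / 3 : ℝ) ^ (κ - 1) = (1 + t) ^ (κ - 1) / 3 ^ (κ - 1) :=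
    Real.div_rpow (by linarith) (by norm_num) _
  have h3 : (3:ℝ) ^ (-1 : ℝ) ≤ 3 ^ (κ - 1) :=
    Real.rpow_le_rpow_of_exponent_le (by norm_num) (by linarith)
  have h4 : (3:ℝ) ^ (-1 : ℝ) = 1 / 3 := by
    rw [Real.rpow_neg_one]; norm_num
  have h5 : (1 + t) ^ (κ - 1) / 3 ^ (κ - 1) ≤ (1 + t) ^ (κ - 1) / (1 / 3) :=
    div_le_div_of_nonneg_left (Real.rpow_nonneg (by linarith) _) (by norm_num) (by rw [← h4]; exact h3)
  have h6 : (1 + t) ^ (κ - 1) / (1 / 3) = 3 * (1 + t) ^ (κ - 1) := by ring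
  rw [h2] at h1
  linarith

private lemma kernel_abs_bound {κ : ℝ} (hκ0 : 0 ≤ κ) (hκ1 : κ ≤ 1) (u : ℝ) :
    abs (|1 + u| ^ κ - |u| ^ κ) ≤ 3 * (1 + |u|) ^ (κ - 1) := by
  rcases le_or_gt |u| 2 with hu | hu
  · -- |u| ≤ 2
    have h1 : |1 + u| ≤ 3 := (abs_add_le 1 u).trans (by rw [abs_one]; linarith)
    have t1 : |1 + u| ^ κ ≤ 3 ^ κ := Real.rpow_le_rpow (abs_nonneg _) h1 hκ0
    have t2 : |u| ^ κ ≤ 3 ^ κ := Real.rpow_le_rpow (abs_nonneg _) (by linarith) hκ0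
    have n1 : 0 ≤ |1 + u| ^ κ := Real.rpow_nonneg (abs_nonneg _) _
    have n2 : 0 ≤ |u| ^ κ := Real.rpow_nonneg (abs_nonneg _) _
    have habs : abs (|1 + u| ^ κ - |u| ^ κ) ≤ 3 ^ κ := abs_le.2 ⟨by linarith, by linarith⟩
    have h2 : (3:ℝ) ^ κ = 3 * 3 ^ (κ - 1) := by
      have h := (Real.rpow_add (by norm_num : (0:ℝ) < 3) 1 (κ - 1)).symm
      rw [Real.rpow_one] at h
      rw [show κ = 1 + (κ - 1) by ring]
      rw [← h]
      ring_nf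
    have h3 : (3:ℝ) ^ (κ - 1) ≤ (1 + |u|) ^ (κ - 1) :=
      Real.rpow_le_rpow_of_nonpos (by positivity) (by linarith) (by linarith)
    calc abs (|1 + u| ^ κ - |u| ^ κ) ≤ 3 ^ κ := habs
      _ = 3 * 3 ^ (κ - 1) := h2
      _ ≤ 3 * (1 + |u|) ^ (κ - 1) := by linarith
  · rcases lt_or_ge u 0 with hneg | hpos
    · -- u < -2 (since |u| > 2 and u < 0)
      have hu2 : u < -2 := by
        rcases abs_cases u with ⟨h, _⟩ | ⟨h, _⟩ <;> linarith
      set v : ℝ := -(1 + u) with hv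
      have hv1 : 1 < v := by simp only [hv]; linarith
      have e1 : |1 + u| = v := by rw [abs_of_neg (by linarith : 1 + u < 0)]
      have e2 : |u| = 1 + v := by rw [abs_of_neg (by linarith : u < 0)]; simp only [hv]; ring
      have hb : (1 + v) ^ κ - v ^ κ ≤ v ^ (κ - 1) := bern_step hκ0 hκ1 hv1.le
      have hge : v ^ κ ≤ (1 + v) ^ κ := Real.rpow_le_rpow (by linarith) (by linarith) hκ0
      have hsh : v ^ (κ - 1) ≤ 3 * (1 + |u|) ^ (κ - 1) := by
        apply shrink hκ0 hκ1 (by linarith) (abs_nonneg u)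
        rw [e2]; linarith
      rw [e2] at hsh
      rw [e1, e2, abs_sub_comm, abs_of_nonneg (by linarith)]
      linarith
    · -- u > 2
      have hu2 : 2 < u := by rwa [abs_of_nonneg hpos] at hu
      have e1 : |1 + u| = 1 + u := abs_of_pos (by linarith)
      have e2 : |u| = u := abs_of_nonneg hpos
      have hb : (1 + u) ^ κ - u ^ κ ≤ u ^ (κ - 1) := bern_step hκ0 hκ1 (by linarith)
      have hge : u ^ κ ≤ (1 + u) ^ κ := Real.rpow_le_rpow (by linarith) (by linarith) hκ0
      have hsh : u ^ (κ - 1) ≤ 3 * (1 + |u|) ^ (κ - 1) := by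
        apply shrink hκ0 hκ1 (by linarith) (abs_nonneg u)
        rw [e2]; linarith
      rw [e2] at hsh
      rw [e1, e2, abs_of_nonneg (by linarith)]
      linarith

private lemma prod_aux {p : ℝ} (hp : 1/2 < p) {A B C : ℝ} (hA : 1 ≤ A) (hB : 1 ≤ B)
    (hC : 0 < C) (hAB : A ≤ B) (hCB : C ≤ B) :
    A ^ (-p) * B ^ (-p) ≤ C ^ (-(p - 1/2)) * A ^ (-(p + 1/2)) := by
  have hA0 : (0:ℝ) < A := lt_of_lt_of_le one_pos hA
  have hB0 : (0:ℝ) < B := lt_of_lt_of_le one_pos hB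
  have e : B ^ (-p) = B ^ (-(1/2) : ℝ) * B ^ (-(p - 1/2)) := by
    rw [← Real.rpow_add hB0]; congr 1; ring
  have h1 : B ^ (-(1/2) : ℝ) ≤ A ^ (-(1/2) : ℝ) :=
    Real.rpow_le_rpow_of_nonpos hA0 hAB (by norm_num)
  have h2 : B ^ (-(p - 1/2)) ≤ C ^ (-(p - 1/2)) :=
    Real.rpow_le_rpow_of_nonpos hC hCB (by linarith)
  have e2 : A ^ (-p) * A ^ (-(1/2) : ℝ) = A ^ (-(p + 1/2)) := by
    rw [← Real.rpow_add hA0]; congr 1; ring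
  calc A ^ (-p) * B ^ (-p) = A ^ (-p) * (B ^ (-(1/2) : ℝ) * B ^ (-(p - 1/2))) := by rw [e]
    _ ≤ A ^ (-p) * (A ^ (-(1/2) : ℝ) * C ^ (-(p - 1/2))) := by
        apply mul_le_mul_of_nonneg_left
          (mul_le_mul h1 h2 (Real.rpow_nonneg hB0.le _) (Real.rpow_nonneg hA0.le _))
          (Real.rpow_nonneg hA0.le _)
    _ = (A ^ (-p) * A ^ (-(1/2) : ℝ)) * C ^ (-(p - 1/2)) := by ring
    _ = C ^ (-(p - 1/2)) * A ^ (-(p + 1/2)) := by rw [e2]; ring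

private lemma prod_rpow_bound {p : ℝ} (hp : 1/2 < p) {A B C : ℝ} (hA : 1 ≤ A) (hB : 1 ≤ B)
    (hC : 0 < C) (hCle : C ≤ A ∨ C ≤ B) :
    A ^ (-p) * B ^ (-p) ≤ C ^ (-(p - 1/2)) * (A ^ (-(p + 1/2)) + B ^ (-(p + 1/2))) := by
  have hA0 : (0:ℝ) < A := lt_of_lt_of_le one_pos hA
  have hB0 : (0:ℝ) < B := lt_of_lt_of_le one_pos hB
  rcases le_total A B with hAB | hBA
  · have hCB : C ≤ B := hCle.elim (fun h => h.trans hAB) id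
    calc A ^ (-p) * B ^ (-p) ≤ C ^ (-(p - 1/2)) * A ^ (-(p + 1/2)) :=
          prod_aux hp hA hB hC hAB hCB
      _ ≤ C ^ (-(p - 1/2)) * (A ^ (-(p + 1/2)) + B ^ (-(p + 1/2))) := by
          apply mul_le_mul_of_nonneg_left (le_add_of_nonneg_right (Real.rpow_nonneg hB0.le _))
            (Real.rpow_nonneg hC.le _)
  · have hCA : C ≤ A := hCle.elim id (fun h => h.trans hBA)
    calc A ^ (-p) * B ^ (-p) = B ^ (-p) * A ^ (-p) := by ring
      _ ≤ C ^ (-(p - 1/2)) * B ^ (-(p + 1/2)) := prod_aux hp hB hA hC hBA hCA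
      _ ≤ C ^ (-(p - 1/2)) * (A ^ (-(p + 1/2)) + B ^ (-(p + 1/2))) := by
          apply mul_le_mul_of_nonneg_left (le_add_of_nonneg_left (Real.rpow_nonneg hA0.le _))
            (Real.rpow_nonneg hC.le _)

/-- Let `α ∈ (0,2)` and `H ∈ (0,1)` with `H − 1/α ≥ 0`.  Then
`∫_ℝ |g(−x) g(j−x)|^(α/2) dx → 0` as `j → ∞`, where
`g(u) = |1+u|^(H−1/α) − |u|^(H−1/α)`. -/
theorem lfsm_kernel_decorrelation (a H : ℝ) (ha : a ∈ Set.Ioo (0:ℝ) 2)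
    (hH : H ∈ Set.Ioo (0:ℝ) 1) (hnonneg : 0 ≤ H - 1 / a) :
    Filter.Tendsto
      (fun j : ℕ => ∫ x : ℝ, |lfsmKernel a H (-x) * lfsmKernel a H ((j : ℝ) - x)| ^ (a / 2))
      Filter.atTop (nhds 0) := by
  obtain ⟨ha0, ha2⟩ := ha
  obtain ⟨hH0, hH1⟩ := hH
  rcases eq_or_lt_of_le hnonneg with hz | hκpos
  · -- degenerate case : H - 1/a = 0, the kernel vanishes identically
    have hg : ∀ u : ℝ, lfsmKernel a H u = 0 := by
      intro u; unfold lfsmKernel; rw [← hz, Real.rpow_zero, Real.rpow_zero, sub_self]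
    have hzero : (fun j : ℕ =>
        ∫ x : ℝ, |lfsmKernel a H (-x) * lfsmKernel a H ((j : ℝ) - x)| ^ (a / 2))
        = fun _ => (0:ℝ) := by
      funext j
      have : ∀ x : ℝ, |lfsmKernel a H (-x) * lfsmKernel a H ((j : ℝ) - x)| ^ (a / 2) = 0 := by
        intro x
        rw [hg, hg, mul_zero, abs_zero, Real.zero_rpow (by positivity : a / 2 ≠ 0)]
      simp only [this, integral_zero]
    rw [hzero]
    exact tendsto_const_nhds
  · -- main case : κ := H - 1/a > 0
    have hainv : (0:ℝ) < 1 / a := by positivity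
    have hκ1 : H - 1 / a ≤ 1 := by linarith
    have haH : 1 ≤ a * H := by
      have h : 1 / a ≤ H := by linarith
      rw [div_le_iff₀ ha0] at h
      linarith
    set p : ℝ := (1 - (H - 1 / a)) * a / 2 with hpdef
    have h2p : 2 * p = a - a * H + 1 := by rw [hpdef]; field_simp; ring
    have hp_half : 1 / 2 < p := by nlinarith [mul_pos ha0 (by linarith : (0:ℝ) < 1 - H)]
    have hp1 : p < 1 := by nlinarith
    have hq : 0 < p - 1 / 2 := by linarith
    have hr : 1 < p + 1 / 2 := by linarith
    -- integrability of the comparison function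
    have hI : Integrable (fun x : ℝ => (1 + |x|) ^ (-(p + 1 / 2))) := by
      have h := integrable_one_add_norm (E := ℝ) (μ := volume) (r := p + 1 / 2) (by simpa using hr)
      simpa [Real.norm_eq_abs] using h
    set K : ℝ := ∫ x : ℝ, (1 + |x|) ^ (-(p + 1 / 2)) with hK
    -- the pointwise bound
    have hpt : ∀ (j : ℕ) (x : ℝ),
        |lfsmKernel a H (-x) * lfsmKernel a H ((j : ℝ) - x)| ^ (a / 2)
          ≤ (9:ℝ) ^ (a / 2) * ((1 + (j:ℝ) / 2) ^ (-(p - 1 / 2)) *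
              ((1 + |x|) ^ (-(p + 1 / 2)) + (1 + |(j:ℝ) - x|) ^ (-(p + 1 / 2)))) := by
      intro j x
      have gb1 : |lfsmKernel a H (-x)| ≤ 3 * (1 + |x|) ^ (H - 1 / a - 1) := by
        simpa [lfsmKernel, abs_neg] using kernel_abs_bound hnonneg hκ1 (-x)
      have gb2 : |lfsmKernel a H ((j:ℝ) - x)| ≤ 3 * (1 + |(j:ℝ) - x|) ^ (H - 1 / a - 1) := by
        simpa [lfsmKernel] using kernel_abs_bound hnonneg hκ1 ((j:ℝ) - x)
      have step1 : |lfsmKernel a H (-x) * lfsmKernel a H ((j:ℝ) - x)|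
          ≤ (3 * (1 + |x|) ^ (H - 1 / a - 1)) * (3 * (1 + |(j:ℝ) - x|) ^ (H - 1 / a - 1)) := by
        rw [abs_mul]
        exact mul_le_mul gb1 gb2 (abs_nonneg _) (by positivity)
      have step2 : |lfsmKernel a H (-x) * lfsmKernel a H ((j:ℝ) - x)| ^ (a / 2)
          ≤ ((3 * (1 + |x|) ^ (H - 1 / a - 1)) *
              (3 * (1 + |(j:ℝ) - x|) ^ (H - 1 / a - 1))) ^ (a / 2) :=
        Real.rpow_le_rpow (abs_nonneg _) step1 (by positivity)
      have eX : ((1 + |x|) ^ (H - 1 / a - 1)) ^ (a / 2) = (1 + |x|) ^ (-p) := by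
        rw [← Real.rpow_mul (by positivity)]
        congr 1
        rw [hpdef]; ring
      have eY : ((1 + |(j:ℝ) - x|) ^ (H - 1 / a - 1)) ^ (a / 2)
          = (1 + |(j:ℝ) - x|) ^ (-p) := by
        rw [← Real.rpow_mul (by positivity)]
        congr 1
        rw [hpdef]; ring
      have eRHS : ((3 * (1 + |x|) ^ (H - 1 / a - 1)) *
              (3 * (1 + |(j:ℝ) - x|) ^ (H - 1 / a - 1))) ^ (a / 2)
          = (9:ℝ) ^ (a / 2) * ((1 + |x|) ^ (-p) * (1 + |(j:ℝ) - x|) ^ (-p)) := by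
        rw [show (3 * (1 + |x|) ^ (H - 1 / a - 1)) *
              (3 * (1 + |(j:ℝ) - x|) ^ (H - 1 / a - 1))
            = 9 * ((1 + |x|) ^ (H - 1 / a - 1) * (1 + |(j:ℝ) - x|) ^ (H - 1 / a - 1)) by ring,
          Real.mul_rpow (by norm_num) (by positivity),
          Real.mul_rpow (by positivity) (by positivity), eX, eY]
      have hCle : (1 + (j:ℝ) / 2) ≤ 1 + |x| ∨ (1 + (j:ℝ) / 2) ≤ 1 + |(j:ℝ) - x| := by
        have hj : (j:ℝ) ≤ |x| + |(j:ℝ) - x| := by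
          calc (j:ℝ) = |(j:ℝ)| := (abs_of_nonneg (Nat.cast_nonneg j)).symm
            _ = |x + ((j:ℝ) - x)| := by ring_nf
            _ ≤ |x| + |(j:ℝ) - x| := abs_add_le _ _
        rcases le_total |x| |(j:ℝ) - x| with h | h
        · right; linarith
        · left; linarith
      have hprod : (1 + |x|) ^ (-p) * (1 + |(j:ℝ) - x|) ^ (-p)
          ≤ (1 + (j:ℝ) / 2) ^ (-(p - 1 / 2)) *
              ((1 + |x|) ^ (-(p + 1 / 2)) + (1 + |(j:ℝ) - x|) ^ (-(p + 1 / 2))) :=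
        prod_rpow_bound hp_half (by linarith [abs_nonneg x]) (by linarith [abs_nonneg ((j:ℝ) - x)]) (by positivity) hCle
      calc |lfsmKernel a H (-x) * lfsmKernel a H ((j:ℝ) - x)| ^ (a / 2)
          ≤ (9:ℝ) ^ (a / 2) * ((1 + |x|) ^ (-p) * (1 + |(j:ℝ) - x|) ^ (-p)) := by
            rw [← eRHS]; exact step2
        _ ≤ (9:ℝ) ^ (a / 2) * ((1 + (j:ℝ) / 2) ^ (-(p - 1 / 2)) *
              ((1 + |x|) ^ (-(p + 1 / 2)) + (1 + |(j:ℝ) - x|) ^ (-(p + 1 / 2)))) :=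
            mul_le_mul_of_nonneg_left hprod (Real.rpow_nonneg (by norm_num) _)
    -- the integral bound
    have key : ∀ j : ℕ,
        (∫ x : ℝ, |lfsmKernel a H (-x) * lfsmKernel a H ((j : ℝ) - x)| ^ (a / 2))
          ≤ (9:ℝ) ^ (a / 2) * (1 + (j:ℝ) / 2) ^ (-(p - 1 / 2)) * (2 * K) := by
      intro j
      have hIj : Integrable (fun x : ℝ => (1 + |(j:ℝ) - x|) ^ (-(p + 1 / 2))) := by
        simpa using hI.comp_sub_left (j:ℝ)
      have hD : Integrable (fun x : ℝ => (9:ℝ) ^ (a / 2) * ((1 + (j:ℝ) / 2) ^ (-(p - 1 / 2)) *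
          ((1 + |x|) ^ (-(p + 1 / 2)) + (1 + |(j:ℝ) - x|) ^ (-(p + 1 / 2))))) :=
        (((hI.add hIj).const_mul _).const_mul _)
      have hKj : (∫ x : ℝ, (1 + |(j:ℝ) - x|) ^ (-(p + 1 / 2))) = K := by
        have h := integral_sub_left_eq_self
          (fun y : ℝ => (1 + |y|) ^ (-(p + 1 / 2))) volume ((j:ℝ))
        simpa [hK] using h
      calc (∫ x : ℝ, |lfsmKernel a H (-x) * lfsmKernel a H ((j : ℝ) - x)| ^ (a / 2))
          ≤ ∫ x : ℝ, (9:ℝ) ^ (a / 2) * ((1 + (j:ℝ) / 2) ^ (-(p - 1 / 2)) *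
              ((1 + |x|) ^ (-(p + 1 / 2)) + (1 + |(j:ℝ) - x|) ^ (-(p + 1 / 2)))) :=
            integral_mono_of_nonneg
              (Filter.Eventually.of_forall fun x => Real.rpow_nonneg (abs_nonneg _) _)
              hD (Filter.Eventually.of_forall (hpt j))
        _ = (9:ℝ) ^ (a / 2) * ((1 + (j:ℝ) / 2) ^ (-(p - 1 / 2)) *
              (∫ x : ℝ, ((1 + |x|) ^ (-(p + 1 / 2)) + (1 + |(j:ℝ) - x|) ^ (-(p + 1 / 2))))) := by
            rw [integral_const_mul, integral_const_mul]
        _ = (9:ℝ) ^ (a / 2) * ((1 + (j:ℝ) / 2) ^ (-(p - 1 / 2)) * (K + K)) := by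
            rw [integral_add hI hIj, hKj, ← hK]
        _ = (9:ℝ) ^ (a / 2) * (1 + (j:ℝ) / 2) ^ (-(p - 1 / 2)) * (2 * K) := by ring
    -- the bounding sequence tends to zero
    have hT : Filter.Tendsto
        (fun j : ℕ => (9:ℝ) ^ (a / 2) * (1 + (j:ℝ) / 2) ^ (-(p - 1 / 2)) * (2 * K))
        Filter.atTop (nhds 0) := by
      have h1 : Filter.Tendsto (fun j : ℕ => 1 + (j:ℝ) / 2) Filter.atTop Filter.atTop := by
        apply Filter.tendsto_atTop_add_const_left
        exact tendsto_natCast_atTop_atTop.atTop_div_const two_pos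
      have h2 : Filter.Tendsto (fun j : ℕ => (1 + (j:ℝ) / 2) ^ (-(p - 1 / 2)))
          Filter.atTop (nhds 0) := (tendsto_rpow_neg_atTop hq).comp h1
      have h3 := (h2.const_mul ((9:ℝ) ^ (a / 2))).mul_const (2 * K)
      simpa using h3
    exact squeeze_zero
      (fun j => integral_nonneg fun x => Real.rpow_nonneg (abs_nonneg _) _) key hT
end
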